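/- arXiv:1606.02750 — 2 statements merged into one kernel-verified Lean document; each statement's English description precedes it below -/
import Mathlib

section
/- Let λ, μ be real numbers with λ ≥ 1 and λ + μ > 3/2, and let n be a natural number. Then for every z in the open unit disc 𝕌 the derivative (𝕎_{λ,μ})'_n(z) is nonzero and Re(𝕎'_{λ,μ}(z)/(𝕎_{λ,μ})'_n(z)) ≥ (2(λ+μ)−3)/(2(λ+μ)−1). -/
/-- The derivative of the second normalized Wright function:
`𝕎'_{λ,μ}(z) = 1 + ∑_{m=1}^∞ (Γ(λ+μ)/(m! Γ(λm+λ+μ))) z^m`. -/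
noncomputable def normWright2Deriv (lam mu : ℝ) (z : ℂ) : ℂ :=
  ∑' m : ℕ,
    ((Real.Gamma (lam + mu) / (Nat.factorial m * Real.Gamma (lam * m + lam + mu)) : ℝ) : ℂ)
      * z ^ m

/-- The derivative of the `n`-th partial sum:
`(𝕎_{λ,μ})'_n(z) = 1 + ∑_{m=1}^n (Γ(λ+μ)/(m! Γ(λm+λ+μ))) z^m`. -/
noncomputable def normWright2PartialDeriv (lam mu : ℝ) (n : ℕ) (z : ℂ) : ℂ :=
  ∑ m ∈ Finset.range (n + 1),
    ((Real.Gamma (lam + mu) / (Nat.factorial m * Real.Gamma (lam * m + lam + mu)) : ℝ) : ℂ)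
      * z ^ m

/-!
Write `𝕎'_{λ,μ}(z) = ∑ cₘ zᵐ` with `c₀ = 1`. For `λ ≥ 1` the Gamma function gives
`cₘ ≤ 1 / (m! (λ+μ)ᵐ) ≤ 2 (2(λ+μ))⁻ᵐ`, so on the unit disc the terms with `m ≥ 1` have total
modulus at most `δ = 2 / (2(λ+μ) - 1) < 1`. Splitting this tail into the part `Q` inside the
partial sum and the remainder `T` gives `𝕎' / 𝕎'ₙ = 1 + T / (1 + Q)` with
`|T| / |1 + Q| ≤ |T| / (1 - |Q|) ≤ |Q| + |T| ≤ δ`, and `1 - δ` is the claimed bound.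
-/

open Finset

theorem Complex.one_sub_le_re_add_div {Q T : ℂ} (h : ‖Q‖ + ‖T‖ < 1) :
    1 + Q ≠ 0 ∧ 1 - (‖Q‖ + ‖T‖) ≤ ((1 + Q + T) / (1 + Q)).re := by
  have hP : 1 - ‖Q‖ ≤ ‖1 + Q‖ := by simpa using norm_sub_norm_le (1 : ℂ) (-Q)
  have hPpos : 0 < ‖1 + Q‖ := by linarith [norm_nonneg T]
  have hP0 : 1 + Q ≠ 0 := norm_pos_iff.mp hPpos
  -- `‖T‖ ≤ (‖Q‖ + ‖T‖)(1 - ‖Q‖)` because `‖Q‖ (1 - ‖Q‖ - ‖T‖) ≥ 0`.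
  have hTP : ‖T / (1 + Q)‖ ≤ ‖Q‖ + ‖T‖ := by
    rw [norm_div, div_le_iff₀ hPpos]
    nlinarith [mul_le_mul_of_nonneg_left hP (add_nonneg (norm_nonneg Q) (norm_nonneg T)),
      mul_nonneg (norm_nonneg Q) (sub_nonneg.mpr h.le)]
  have hdiv : (1 + Q + T) / (1 + Q) = 1 + T / (1 + Q) := by field_simp
  refine ⟨hP0, ?_⟩
  rw [hdiv, Complex.add_re, Complex.one_re]
  linarith [(abs_le.1 (Complex.abs_re_le_norm (T / (1 + Q)))).1]

theorem one_sub_tsum_norm_le_re_tsum_div_sum_range {a : ℕ → ℂ}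
    (ha : Summable fun m => ‖a m‖) (h0 : a 0 = 1) (htail : ∑' m, ‖a (m + 1)‖ < 1) (n : ℕ) :
    ∑ m ∈ range (n + 1), a m ≠ 0 ∧
      1 - ∑' m, ‖a (m + 1)‖ ≤ ((∑' m, a m) / ∑ m ∈ range (n + 1), a m).re := by
  set Q := ∑ m ∈ range n, a (m + 1)
  set T := ∑' m, a (m + n + 1)
  have hP : ∑ m ∈ range (n + 1), a m = 1 + Q := by rw [sum_range_succ', h0, add_comm]
  have hW : ∑' m, a m = 1 + Q + T := by rw [← hP, ← ha.of_norm.sum_add_tsum_nat_add (n + 1)]; rfl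
  have hshift : Summable fun m => ‖a (m + 1)‖ := (summable_nat_add_iff 1).mpr ha
  have hQT : ‖Q‖ + ‖T‖ ≤ ∑' m, ‖a (m + 1)‖ :=
    calc ‖Q‖ + ‖T‖ ≤ ∑ m ∈ range n, ‖a (m + 1)‖ + ∑' m, ‖a (m + n + 1)‖ :=
          add_le_add (norm_sum_le _ _)
            (norm_tsum_le_tsum_norm ((summable_nat_add_iff n).mpr hshift))
      _ = ∑' m, ‖a (m + 1)‖ := hshift.sum_add_tsum_nat_add n
  obtain ⟨hne, hre⟩ := Complex.one_sub_le_re_add_div (hQT.trans_lt htail)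
  rw [hP, hW]
  exact ⟨hne, by linarith⟩

theorem Nat.two_pow_le_two_mul_factorial (m : ℕ) : 2 ^ m ≤ 2 * m.factorial := by
  cases m with
  | zero => simp
  | succ k =>
    have h : 2 ^ k ≤ (k + 1).factorial := by
      simpa [add_comm] using Nat.factorial_mul_pow_le_factorial (m := 1) (n := k)
    rw [pow_succ]
    linarith

theorem Real.pow_mul_Gamma_le_Gamma_nat_add {s : ℝ} (hs : 0 < s) (k : ℕ) :
    s ^ k * Gamma s ≤ Gamma (k + s) := by
  induction k with
  | zero => simp
  | succ k ih =>
    have hk : 0 < (k : ℝ) + s := by positivity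
    calc s ^ (k + 1) * Gamma s = s * (s ^ k * Gamma s) := by ring
      _ ≤ ((k : ℝ) + s) * Gamma (k + s) :=
          mul_le_mul (by linarith [k.cast_nonneg (α := ℝ)]) ih
            (mul_nonneg (by positivity) (Gamma_pos_of_pos hs).le) hk.le
      _ = Gamma ((k + 1 : ℕ) + s) := by
          rw [← Gamma_add_one hk.ne']; push_cast; ring_nf

theorem Real.pow_mul_Gamma_le_Gamma_mul_add {lam s : ℝ} (hlam : 1 ≤ lam) (hs : 1 ≤ s) (m : ℕ) :
    s ^ m * Gamma s ≤ Gamma (lam * m + s) := by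
  rcases Nat.eq_zero_or_pos m with rfl | hm
  · simp
  have hm1 : (1 : ℝ) ≤ m := by exact_mod_cast hm
  refine (pow_mul_Gamma_le_Gamma_nat_add (by linarith) m).trans ?_
  exact Gamma_strictMonoOn_Ici.monotoneOn (Set.mem_Ici.mpr (by linarith))
    (Set.mem_Ici.mpr (by nlinarith)) (by nlinarith)

theorem tsum_two_mul_inv_two_mul_pow_succ {s : ℝ} (hs : 1 < 2 * s) :
    ∑' m : ℕ, 2 * (2 * s)⁻¹ ^ (m + 1) = 2 / (2 * s - 1) := by
  have hr1 : (2 * s)⁻¹ < 1 := inv_lt_one_of_one_lt₀ hs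
  simp_rw [pow_succ, ← mul_assoc]
  rw [tsum_mul_right, tsum_mul_left, tsum_geometric_of_lt_one (by positivity) hr1]
  have hs0 : s ≠ 0 := by rintro rfl; linarith
  have hs1 : 2 * s - 1 ≠ 0 := by linarith
  field_simp

noncomputable def normWright2Coeff (lam mu : ℝ) (m : ℕ) : ℝ :=
  Real.Gamma (lam + mu) / (Nat.factorial m * Real.Gamma (lam * m + lam + mu))

section normWright2Coeff

variable {lam mu : ℝ}

theorem normWright2Coeff_zero (hs : 0 < lam + mu) : normWright2Coeff lam mu 0 = 1 := by
  simpa [normWright2Coeff] using div_self (Real.Gamma_pos_of_pos hs).ne'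

theorem normWright2Coeff_nonneg (hlam : 0 ≤ lam) (hs : 0 < lam + mu) (m : ℕ) :
    0 ≤ normWright2Coeff lam mu m := by
  have harg : 0 < lam * m + lam + mu := by nlinarith [m.cast_nonneg (α := ℝ)]
  unfold normWright2Coeff
  have := Real.Gamma_pos_of_pos hs
  have := Real.Gamma_pos_of_pos harg
  positivity

theorem normWright2Coeff_le (hlam : 1 ≤ lam) (hs : 1 ≤ lam + mu) (m : ℕ) :
    normWright2Coeff lam mu m ≤ 2 * (2 * (lam + mu))⁻¹ ^ m := by
  set s := lam + mu
  have hs0 : 0 < s := by linarith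
  have hΓ : 0 < Real.Gamma s := Real.Gamma_pos_of_pos hs0
  have hfact : (2 : ℝ) ^ m ≤ 2 * m.factorial := by
    exact_mod_cast Nat.two_pow_le_two_mul_factorial m
  have hden : m.factorial * (s ^ m * Real.Gamma s) ≤
      m.factorial * Real.Gamma (lam * m + lam + mu) := by
    rw [add_assoc]
    exact mul_le_mul_of_nonneg_left (Real.pow_mul_Gamma_le_Gamma_mul_add hlam hs m)
      (by positivity)
  calc normWright2Coeff lam mu m
      ≤ Real.Gamma s / (m.factorial * (s ^ m * Real.Gamma s)) :=
        div_le_div_of_nonneg_left hΓ.le (by positivity) hden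
    _ = 1 / (m.factorial * s ^ m) := by field_simp
    _ ≤ 2 / (2 ^ m * s ^ m) := by
        rw [div_le_div_iff₀ (by positivity) (by positivity)]
        nlinarith [pow_pos hs0 m]
    _ = 2 * (2 * s)⁻¹ ^ m := by rw [inv_pow, mul_pow, div_eq_mul_inv]

theorem norm_normWright2Coeff_mul_pow_le (hlam : 1 ≤ lam) (hs : 1 ≤ lam + mu) {z : ℂ}
    (hz : ‖z‖ ≤ 1) (m : ℕ) :
    ‖(normWright2Coeff lam mu m : ℂ) * z ^ m‖ ≤ 2 * (2 * (lam + mu))⁻¹ ^ m := by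
  have hc : 0 ≤ normWright2Coeff lam mu m :=
    normWright2Coeff_nonneg (by linarith) (by linarith) m
  rw [norm_mul, Complex.norm_real, norm_pow, Real.norm_of_nonneg hc]
  exact (mul_le_of_le_one_right hc (pow_le_one₀ (norm_nonneg z) hz)).trans
    (normWright2Coeff_le hlam hs m)

end normWright2Coeff

/-- If `λ ≥ 1` and `λ + μ > 3/2`, then on the open unit disc `(𝕎_{λ,μ})'_n` is nonzero
and `Re(𝕎'_{λ,μ}(z)/(𝕎_{λ,μ})'_n(z)) ≥ (2(λ+μ)-3)/(2(λ+μ)-1)`. -/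
theorem re_normWright2Deriv_div_partialDeriv (lam mu : ℝ) (hlam : 1 ≤ lam)
    (hmu : 3 / 2 < lam + mu) (n : ℕ) :
    ∀ z : ℂ, ‖z‖ < 1 →
      normWright2PartialDeriv lam mu n z ≠ 0 ∧
      (2 * (lam + mu) - 3) / (2 * (lam + mu) - 1) ≤
        (normWright2Deriv lam mu z / normWright2PartialDeriv lam mu n z).re := by
  intro z hz
  set a : ℕ → ℂ := fun m => (normWright2Coeff lam mu m : ℂ) * z ^ m
  set r := (2 * (lam + mu))⁻¹
  have ha : ∀ m, ‖a m‖ ≤ 2 * r ^ m :=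
    norm_normWright2Coeff_mul_pow_le hlam (by linarith) hz.le
  have hgeo : Summable fun m => 2 * r ^ m :=
    (summable_geometric_of_lt_one (by positivity) (inv_lt_one_of_one_lt₀ (by linarith))).mul_left 2
  have hnorm : Summable fun m => ‖a m‖ := hgeo.of_nonneg_of_le (fun _ => norm_nonneg _) ha
  have htail : ∑' m, ‖a (m + 1)‖ ≤ 2 / (2 * (lam + mu) - 1) :=
    calc ∑' m, ‖a (m + 1)‖ ≤ ∑' m, 2 * r ^ (m + 1) :=
          ((summable_nat_add_iff 1).mpr hnorm).tsum_le_tsum (fun m => ha (m + 1))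
            ((summable_nat_add_iff 1).mpr hgeo)
      _ = 2 / (2 * (lam + mu) - 1) := tsum_two_mul_inv_two_mul_pow_succ (by linarith)
  have hbound : (2 * (lam + mu) - 3) / (2 * (lam + mu) - 1) = 1 - 2 / (2 * (lam + mu) - 1) := by
    have : 2 * (lam + mu) - 1 ≠ 0 := by linarith
    field_simp
    ring
  have hlt : 2 / (2 * (lam + mu) - 1) < 1 := by rw [div_lt_one (by linarith)]; linarith
  obtain ⟨hne, hre⟩ := one_sub_tsum_norm_le_re_tsum_div_sum_range hnorm
    (by simp [a, normWright2Coeff_zero (show 0 < lam + mu by linarith)]) (htail.trans_lt hlt) n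
  refine ⟨hne, ?_⟩
  rw [hbound]
  exact (sub_le_sub_left htail 1).trans hre
end

section
/- Let λ, μ be real numbers with λ ≥ 1 and λ + μ > 3/2, and let n be a natural number. Then for every z in the open unit disc 𝕌 the derivative 𝕎'_{λ,μ}(z) is nonzero and Re((𝕎_{λ,μ})'_n(z)/𝕎'_{λ,μ}(z)) ≥ (2(λ+μ)−1)/(2(λ+μ)+1). -/
/-! With `b = λ + μ`, the bounds `(m+1)! ≥ 2ᵐ` and `Γ(λ(m+1) + b) ≥ Γ(b + 1 + m) ≥ b Γ(b) (b+1)ᵐ`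
give `Γ(b) / ((m+1)! Γ(λ(m+1) + b)) ≤ b⁻¹ (2(b+1))⁻ᵐ`, so on the unit disc the non-constant terms of
`𝕎'` have total modulus at most `s = 2/(2b-1) < 1`.

For any series `f = ∑ aₘ` with `a₀ = 1` and `∑_{m ≥ 1} |aₘ| ≤ s < 1`, split `f = P + T` after `n + 1`
terms. If `A` is the sum of `|aₘ|` over `1 ≤ m ≤ n`, then `|P| ≥ 1 - A` and
`|T| ≤ s - A ≤ s(1 - A) ≤ s|P|`, so `P / f = 1 / (1 + t)` with `|t| ≤ s`, and
`Re (1 / (1 + t)) ≥ 1 / (1 + s) = (2b-1)/(2b+1)`. -/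

open Finset

theorem Complex.one_div_one_add_le_re_inv_one_add {t : ℂ} {ρ : ℝ} (ht : ‖t‖ ≤ ρ) (hρ : ρ < 1) :
    1 / (1 + ρ) ≤ (1 + t)⁻¹.re := by
  have hpos : 0 < Complex.normSq (1 + t) := by
    refine Complex.normSq_pos.2 fun h => ?_
    have : ‖t‖ = 1 := by simpa using congrArg norm (eq_neg_of_add_eq_zero_right h)
    linarith
  have hsq : ‖t‖ ^ 2 = t.re ^ 2 + t.im ^ 2 := by
    rw [Complex.sq_norm, Complex.normSq_apply]; ring
  rw [Complex.inv_re, div_le_div_iff₀ (by linarith [norm_nonneg t]) hpos, Complex.normSq_apply]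
  simp only [Complex.add_re, Complex.one_re, Complex.add_im, Complex.one_im, zero_add]
  -- `(1 + ρ)(1 + x) - |1 + t|² = (ρ - x)(1 - ρ) + ρ² - ‖t‖²` with `x = Re t ≤ ‖t‖ ≤ ρ`
  nlinarith [Complex.re_le_norm t, norm_nonneg t,
    mul_nonneg (sub_nonneg.2 ((Complex.re_le_norm t).trans ht)) (sub_nonneg.2 hρ.le)]

section PartialSums

variable {a : ℕ → ℂ} {s : ℝ}

theorem one_sub_sum_norm_le_norm_sum_range (ha0 : a 0 = 1) (n : ℕ) :
    1 - ∑ m ∈ range n, ‖a (m + 1)‖ ≤ ‖∑ m ∈ range (n + 1), a m‖ := by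
  rw [sum_range_succ', ha0]
  calc 1 - ∑ m ∈ range n, ‖a (m + 1)‖ ≤ ‖(1 : ℂ)‖ - ‖-∑ m ∈ range n, a (m + 1)‖ := by
        rw [norm_one, norm_neg]; exact sub_le_sub_left (norm_sum_le _ _) 1
    _ ≤ ‖∑ m ∈ range n, a (m + 1) + 1‖ := by
        rw [add_comm, ← sub_neg_eq_add]; exact norm_sub_norm_le _ _

theorem one_sub_le_norm_sum_range (ha0 : a 0 = 1) (ha : Summable fun m => ‖a (m + 1)‖)
    (hs : ∑' m, ‖a (m + 1)‖ ≤ s) (n : ℕ) : 1 - s ≤ ‖∑ m ∈ range (n + 1), a m‖ :=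
  (sub_le_sub_left (((ha.sum_le_tsum _ fun _ _ => norm_nonneg _)).trans hs) 1).trans
    (one_sub_sum_norm_le_norm_sum_range ha0 n)

theorem norm_tsum_tail_le_mul_norm_sum_range (ha0 : a 0 = 1)
    (ha : Summable fun m => ‖a (m + 1)‖) (hs : ∑' m, ‖a (m + 1)‖ ≤ s) (hs1 : s ≤ 1) (n : ℕ) :
    ‖∑' k, a (k + (n + 1))‖ ≤ s * ‖∑ m ∈ range (n + 1), a m‖ := by
  set A := ∑ m ∈ range n, ‖a (m + 1)‖
  have hA : 0 ≤ A := sum_nonneg fun _ _ => norm_nonneg _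
  have htail : Summable fun k => ‖a (k + (n + 1))‖ := (summable_nat_add_iff n).2 ha
  have hsplit : A + ∑' k, ‖a (k + (n + 1))‖ = ∑' m, ‖a (m + 1)‖ := ha.sum_add_tsum_nat_add n
  have hs0 : 0 ≤ s := (tsum_nonneg fun _ => norm_nonneg _).trans hs
  have hpartial := one_sub_sum_norm_le_norm_sum_range ha0 n
  calc ‖∑' k, a (k + (n + 1))‖ ≤ ∑' k, ‖a (k + (n + 1))‖ := norm_tsum_le_tsum_norm htail
    _ ≤ s * (1 - A) := by nlinarith [mul_nonneg (sub_nonneg.2 hs1) hA]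
    _ ≤ s * ‖∑ m ∈ range (n + 1), a m‖ := mul_le_mul_of_nonneg_left hpartial hs0

theorem tsum_ne_zero_and_le_re_sum_range_div_tsum (ha0 : a 0 = 1)
    (ha : Summable fun m => ‖a (m + 1)‖) (hs : ∑' m, ‖a (m + 1)‖ ≤ s) (hs1 : s < 1) (n : ℕ) :
    ∑' m, a m ≠ 0 ∧ 1 / (1 + s) ≤ ((∑ m ∈ range (n + 1), a m) / ∑' m, a m).re := by
  set P := ∑ m ∈ range (n + 1), a m
  set T := ∑' k, a (k + (n + 1))
  have hP : P ≠ 0 := norm_pos_iff.1 <| by linarith [one_sub_le_norm_sum_range ha0 ha hs n]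
  have hT : ‖T / P‖ ≤ s := by
    rw [norm_div, div_le_iff₀ (norm_pos_iff.2 hP)]
    exact norm_tsum_tail_le_mul_norm_sum_range ha0 ha hs hs1.le n
  have hsum : ∑' m, a m = P * (1 + T / P) := by
    rw [mul_add, mul_one, mul_div_cancel₀ _ hP]
    exact ((summable_nat_add_iff 1).1 ha.of_norm).sum_add_tsum_nat_add (n + 1) |>.symm
  have hre := Complex.one_div_one_add_le_re_inv_one_add hT hs1
  refine ⟨fun h => ?_, ?_⟩
  · rw [hsum, mul_eq_zero, or_iff_right hP] at h
    rw [h, inv_zero, Complex.zero_re] at hre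
    linarith [one_div_pos.2 (show 0 < 1 + s by linarith [(norm_nonneg _).trans hT])]
  · rwa [hsum, div_mul_cancel_left₀ hP]

end PartialSums

theorem Real.Gamma_mul_pow_le_Gamma_add_nat {x : ℝ} (hx : 0 < x) (k : ℕ) :
    Real.Gamma x * x ^ k ≤ Real.Gamma (x + k) := by
  induction k with
  | zero => simp
  | succ k ih =>
    have hxk : x ≤ x + k := le_add_of_nonneg_right k.cast_nonneg
    rw [Nat.cast_succ, ← add_assoc, Real.Gamma_add_one (by positivity), pow_succ, ← mul_assoc,
      mul_comm (x + k)]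
    exact mul_le_mul ih hxk hx.le (Real.Gamma_pos_of_pos (by positivity)).le

-- `normWright2Deriv lam mu z` is definitionally `∑' m, wrightCoeff lam mu m * z ^ m`.
open Nat in
noncomputable def wrightCoeff (lam mu : ℝ) (m : ℕ) : ℝ :=
  Real.Gamma (lam + mu) / (m ! * Real.Gamma (lam * m + lam + mu))

section WrightCoeff

variable {lam mu : ℝ}

theorem wrightCoeff_zero (hb : 0 < lam + mu) : wrightCoeff lam mu 0 = 1 := by
  simp [wrightCoeff, (Real.Gamma_pos_of_pos hb).ne']

theorem wrightCoeff_nonneg (hlam : 0 ≤ lam) (hb : 0 ≤ lam + mu) (m : ℕ) :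
    0 ≤ wrightCoeff lam mu m := by
  have harg : 0 ≤ lam * m + lam + mu := by nlinarith [mul_nonneg hlam m.cast_nonneg]
  exact div_nonneg (Real.Gamma_nonneg_of_nonneg hb)
    (mul_nonneg (Nat.cast_nonneg _) (Real.Gamma_nonneg_of_nonneg harg))

theorem wrightCoeff_succ_le (hlam : 1 ≤ lam) (hb : 1 ≤ lam + mu) (k : ℕ) :
    wrightCoeff lam mu (k + 1) ≤ 1 / (lam + mu) * (1 / (2 * (lam + mu + 1))) ^ k := by
  set b := lam + mu
  have hb0 : 0 < b := by linarith
  have hGb := Real.Gamma_pos_of_pos hb0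
  have hGamma : b * Real.Gamma b * (b + 1) ^ k ≤ Real.Gamma (lam * ↑(k + 1) + lam + mu) := by
    have h2 : (2 : ℝ) ≤ b + 1 + k := by linarith [k.cast_nonneg (α := ℝ)]
    have hle : b + 1 + k ≤ lam * ↑(k + 1) + lam + mu := by
      push_cast; nlinarith [k.cast_nonneg (α := ℝ)]
    have hmono := Real.Gamma_strictMonoOn_Ici.monotoneOn h2 (h2.trans hle) hle
    rw [← Real.Gamma_add_one hb0.ne']
    exact (Real.Gamma_mul_pow_le_Gamma_add_nat (by positivity) k).trans hmono
  have hfact : (2 : ℝ) ^ k ≤ (k + 1).factorial := by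
    exact_mod_cast (by simpa [add_comm] using @Nat.factorial_mul_pow_le_factorial 1 k)
  calc wrightCoeff lam mu (k + 1)
      ≤ Real.Gamma b / (2 ^ k * (b * Real.Gamma b * (b + 1) ^ k)) :=
        div_le_div_of_nonneg_left hGb.le (by positivity)
          (mul_le_mul hfact hGamma (by positivity) (by positivity))
    _ = 1 / b * (1 / (2 * (b + 1))) ^ k := by
        rw [div_pow, one_pow, mul_pow]
        field_simp

theorem summable_wrightCoeff_succ (hlam : 1 ≤ lam) (hb : 1 ≤ lam + mu) :
    Summable fun k => wrightCoeff lam mu (k + 1) :=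
  .of_nonneg_of_le (fun k => wrightCoeff_nonneg (by linarith) (by linarith) _)
    (wrightCoeff_succ_le hlam hb)
    ((summable_geometric_of_lt_one (by positivity)
      (by rw [div_lt_one (by linarith)]; linarith)).mul_left _)

theorem tsum_wrightCoeff_succ_le (hlam : 1 ≤ lam) (hb : 1 ≤ lam + mu) :
    ∑' k, wrightCoeff lam mu (k + 1) ≤ 2 / (2 * (lam + mu) - 1) := by
  set b := lam + mu
  have hr : 1 / (2 * (b + 1)) < 1 := by rw [div_lt_one (by linarith)]; linarith
  calc ∑' k, wrightCoeff lam mu (k + 1) ≤ ∑' k : ℕ, 1 / b * (1 / (2 * (b + 1))) ^ k :=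
        (summable_wrightCoeff_succ hlam hb).tsum_le_tsum (wrightCoeff_succ_le hlam hb)
          ((summable_geometric_of_lt_one (by positivity) hr).mul_left _)
    _ = (2 * b + 2) / (b * (2 * b + 1)) := by
        rw [tsum_mul_left, tsum_geometric_of_lt_one (by positivity) hr,
          one_sub_div (by positivity), show 2 * (b + 1) - 1 = 2 * b + 1 by ring, inv_div]
        field_simp
    _ ≤ 2 / (2 * b - 1) := by
        rw [div_le_div_iff₀ (by positivity) (by linarith)]
        nlinarith

theorem norm_wrightCoeff_mul_pow_le (hlam : 0 ≤ lam) (hb : 0 ≤ lam + mu) {z : ℂ} (hz : ‖z‖ ≤ 1)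
    (m : ℕ) : ‖(wrightCoeff lam mu m : ℂ) * z ^ m‖ ≤ wrightCoeff lam mu m := by
  rw [norm_mul, norm_pow, Complex.norm_real, Real.norm_of_nonneg (wrightCoeff_nonneg hlam hb m)]
  exact mul_le_of_le_one_right (wrightCoeff_nonneg hlam hb m) (pow_le_one₀ (norm_nonneg z) hz)

end WrightCoeff

/-- If `λ ≥ 1` and `λ + μ > 3/2`, then on the open unit disc `𝕎'_{λ,μ}` is nonzero
and `Re((𝕎_{λ,μ})'_n(z)/𝕎'_{λ,μ}(z)) ≥ (2(λ+μ)-1)/(2(λ+μ)+1)`. -/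
theorem re_partialDeriv_div_normWright2Deriv (lam mu : ℝ) (hlam : 1 ≤ lam)
    (hmu : 3 / 2 < lam + mu) (n : ℕ) :
    ∀ z : ℂ, ‖z‖ < 1 →
      normWright2Deriv lam mu z ≠ 0 ∧
      (2 * (lam + mu) - 1) / (2 * (lam + mu) + 1) ≤
        (normWright2PartialDeriv lam mu n z / normWright2Deriv lam mu z).re := by
  intro z hz
  have hb : 1 ≤ lam + mu := by linarith
  have hnorm : ∀ m, ‖(wrightCoeff lam mu m : ℂ) * z ^ m‖ ≤ wrightCoeff lam mu m :=
    norm_wrightCoeff_mul_pow_le (by linarith) (by linarith) hz.le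
  have ha : Summable fun m => ‖(wrightCoeff lam mu (m + 1) : ℂ) * z ^ (m + 1)‖ :=
    .of_nonneg_of_le (fun _ => norm_nonneg _) (fun m => hnorm (m + 1))
      (summable_wrightCoeff_succ hlam hb)
  have hs : ∑' m, ‖(wrightCoeff lam mu (m + 1) : ℂ) * z ^ (m + 1)‖ ≤ 2 / (2 * (lam + mu) - 1) :=
    (ha.tsum_le_tsum (fun m => hnorm (m + 1)) (summable_wrightCoeff_succ hlam hb)).trans
      (tsum_wrightCoeff_succ_le hlam hb)
  have hs1 : 2 / (2 * (lam + mu) - 1) < 1 := by rw [div_lt_one (by linarith)]; linarith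
  have hbound :
      1 / (1 + 2 / (2 * (lam + mu) - 1)) = (2 * (lam + mu) - 1) / (2 * (lam + mu) + 1) := by
    rw [one_add_div (by linarith), one_div_div]
    ring_nf
  rw [← hbound]
  exact tsum_ne_zero_and_le_re_sum_range_div_tsum
    (a := fun m => (wrightCoeff lam mu m : ℂ) * z ^ m) (by simp [wrightCoeff_zero (show 0 < lam + mu by linarith)]) ha hs hs1 n
end
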